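/- arXiv:1401.5281 — 3 statements merged into one kernel-verified Lean document; each statement's English description precedes it below -/
import Mathlib

section
/- Fix 0 ≤ t < T and y ∈ ℝ^N. If (x,u) is a feasible control pair for (t,y) that minimizes ∫_t^T F(x(s),u(s)) ds among all feasible control pairs for (t,y), then the path x (which is admissible with x' (s) = f(x(s),u(s))) satisfies ∫_t^T φ(x(s), x'(s)) ds ≤ ∫_t^T φ(z(s), z'(s)) ds for every admissible path z on [t,T] starting at y, where the integrals are taken with values in (−∞, +∞]. -/
/-
The optimal pair is admissible, and since `φ(x, f(x,u)) ≤ F(x,u)` its `φ`-cost is at most its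
cost `∫ F(x,u)`. Conversely, if an admissible `z` has finite `φ`-cost, a measurable choice of
minimisers `u'(s)` of `F(z(s), ·)` on `{v ∈ K | f(z(s), v) = z'(s)}` makes `(z, u')` a feasible
pair of cost exactly `∫ φ(z, z')`, and optimality of `(x, u)` closes the chain.

The measurable choice comes from lexicographic minimisation over the coordinates of `ℝ^m`: the
least value of a continuous function over the compact sections of a closed set is lower
semicontinuous in the parameter, hence measurable.
-/

open MeasureTheory Set

noncomputable section

/-- An admissible path on `[a,b]` starting at `y`. -/
def Admissible {N : ℕ} (a b : ℝ) (y : EuclideanSpace ℝ (Fin N))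
    (z w : ℝ → EuclideanSpace ℝ (Fin N)) : Prop :=
  IntervalIntegrable w volume a b ∧
  ∀ s ∈ Icc a b, z s = y + ∫ r in a..s, w r

/-- A feasible control pair for `(t,y)`. -/
def FeasiblePair {N m : ℕ} (T : ℝ) (K : Set (EuclideanSpace ℝ (Fin m)))
    (f : EuclideanSpace ℝ (Fin N) → EuclideanSpace ℝ (Fin m) → EuclideanSpace ℝ (Fin N))
    (t : ℝ) (y : EuclideanSpace ℝ (Fin N))
    (x : ℝ → EuclideanSpace ℝ (Fin N)) (u : ℝ → EuclideanSpace ℝ (Fin m)) : Prop :=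
  Measurable u ∧ (∀ s ∈ Icc t T, u s ∈ K) ∧
  IntervalIntegrable (fun r => f (x r) (u r)) volume t T ∧
  ∀ s ∈ Icc t T, x s = y + ∫ r in t..s, f (x r) (u r)

/-- The reformulated integrand `φ(x,ξ) = inf {F(x,u) : u ∈ K, f(x,u) = ξ}`, with
value `+∞` (in `EReal`) when no such `u` exists. -/
def phiRe {N m : ℕ} (K : Set (EuclideanSpace ℝ (Fin m)))
    (F : EuclideanSpace ℝ (Fin N) → EuclideanSpace ℝ (Fin m) → ℝ)
    (f : EuclideanSpace ℝ (Fin N) → EuclideanSpace ℝ (Fin m) → EuclideanSpace ℝ (Fin N))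
    (x ξ : EuclideanSpace ℝ (Fin N)) : EReal :=
  sInf ((fun u => ((F x u : ℝ) : EReal)) '' {u | u ∈ K ∧ f x u = ξ})

open scoped Classical in
/-- The variational cost `∫_t^T φ(z,z')` with values in `(-∞,+∞]`: it is the real
integral when `φ(z,z')` is finite a.e. on `(t,T)` and integrable, and `+∞` otherwise
(legitimate since `F`, hence `φ`, is bounded below). -/
def Jphi {N m : ℕ} (K : Set (EuclideanSpace ℝ (Fin m)))
    (F : EuclideanSpace ℝ (Fin N) → EuclideanSpace ℝ (Fin m) → ℝ)
    (f : EuclideanSpace ℝ (Fin N) → EuclideanSpace ℝ (Fin m) → EuclideanSpace ℝ (Fin N))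
    (t T : ℝ) (z w : ℝ → EuclideanSpace ℝ (Fin N)) : EReal :=
  if (∀ᵐ s ∂(volume.restrict (Ioo t T)), ∃ u ∈ K, f (z s) u = w s) ∧
      IntervalIntegrable (fun s => (phiRe K F f (z s) (w s)).toReal) volume t T
  then ((∫ s in t..T, (phiRe K F f (z s) (w s)).toReal : ℝ) : EReal)
  else ⊤

open Function

section SectionInf

variable {X Y : Type*} {K : Set Y} {P : Set (X × Y)}

def sectionInf (K : Set Y) (P : Set (X × Y)) (Φ : X → Y → ℝ) (x : X) : EReal :=
  sInf ((fun u => (Φ x u : EReal)) '' {u | u ∈ K ∧ (x, u) ∈ P})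

theorem sectionInf_le {Φ : X → Y → ℝ} {x : X} {u : Y} (hu : u ∈ K) (hxu : (x, u) ∈ P) :
    sectionInf K P Φ x ≤ Φ x u :=
  sInf_le ⟨u, ⟨hu, hxu⟩, rfl⟩

variable [TopologicalSpace X] [TopologicalSpace Y]

theorem IsCompact.isClosed_setOf_exists_mem_prod (hK : IsCompact K) (hP : IsClosed P) :
    IsClosed {x | ∃ u ∈ K, (x, u) ∈ P} := by
  have : CompactSpace K := isCompact_iff_compactSpace.mp hK
  have hPK : IsClosed {q : K × X | (q.2, (q.1 : Y)) ∈ P} :=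
    hP.preimage (continuous_snd.prodMk (continuous_subtype_val.comp continuous_fst))
  convert isClosedMap_snd_of_compactSpace _ hPK using 1
  ext x
  exact ⟨fun ⟨u, hu, hxu⟩ => ⟨(⟨u, hu⟩, x), hxu, rfl⟩, fun ⟨⟨u, _⟩, hxu, hx⟩ => ⟨u, u.2, hx ▸ hxu⟩⟩

variable {Φ : X → Y → ℝ} {x : X} {u : Y}

theorem exists_sectionInf_eq (hK : IsCompact K) (hP : IsClosed P) (hΦ : Continuous (Φ x))
    (h : ∃ u ∈ K, (x, u) ∈ P) : ∃ u ∈ K, (x, u) ∈ P ∧ sectionInf K P Φ x = Φ x u := by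
  have hS : IsCompact {u | u ∈ K ∧ (x, u) ∈ P} :=
    hK.inter_right (hP.preimage (Continuous.prodMk_right x))
  obtain ⟨u₀, ⟨hu₀, hxu₀⟩, hmin⟩ := hS.exists_isMinOn h hΦ.continuousOn
  refine ⟨u₀, hu₀, hxu₀, le_antisymm (sectionInf_le hu₀ hxu₀) (le_sInf ?_)⟩
  rintro _ ⟨v, hv, rfl⟩
  exact EReal.coe_le_coe_iff.2 (hmin hv)

theorem sectionInf_toReal_le (hK : IsCompact K) (hP : IsClosed P) (hΦ : Continuous (Φ x))
    (hu : u ∈ K) (hxu : (x, u) ∈ P) : (sectionInf K P Φ x).toReal ≤ Φ x u := by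
  obtain ⟨v, -, -, hv⟩ := exists_sectionInf_eq hK hP hΦ ⟨u, hu, hxu⟩
  rw [hv, EReal.toReal_coe, ← EReal.coe_le_coe_iff, ← hv]
  exact sectionInf_le hu hxu

theorem lowerSemicontinuous_sectionInf (hK : IsCompact K) (hP : IsClosed P)
    (hΦ : Continuous (uncurry Φ)) : LowerSemicontinuous (sectionInf K P Φ) := by
  refine lowerSemicontinuous_iff_isClosed_preimage.2 fun c => ?_
  rcases eq_or_ne c ⊤ with rfl | hc
  · simp only [Iic_top, preimage_univ, isClosed_univ]
  have hsub : sectionInf K P Φ ⁻¹' Iic c =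
      {x | ∃ u ∈ K, (x, u) ∈ P ∩ {q | (Φ q.1 q.2 : EReal) ≤ c}} := by
    ext x
    refine ⟨fun hx => ?_, fun ⟨u, hu, hxu, hle⟩ => (sectionInf_le hu hxu).trans hle⟩
    have hne : ∃ u ∈ K, (x, u) ∈ P := by
      by_contra hempty
      refine hc (top_le_iff.1 (le_trans ?_ hx))
      refine le_sInf ?_
      rintro _ ⟨u, ⟨hu, hxu⟩, rfl⟩
      exact absurd ⟨u, hu, hxu⟩ hempty
    obtain ⟨u, hu, hxu, heq⟩ := exists_sectionInf_eq hK hP (hΦ.uncurry_left x) hne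
    exact ⟨u, hu, hxu, show (Φ x u : EReal) ≤ c from heq ▸ hx⟩
  rw [hsub]
  exact hK.isClosed_setOf_exists_mem_prod
    (hP.inter (isClosed_le (continuous_coe_real_ereal.comp hΦ) continuous_const))

end SectionInf

section Selection

variable {X : Type*} [TopologicalSpace X] [MeasurableSpace X] [OpensMeasurableSpace X]

/-- Lexicographic minimisation: fix the first coordinate at its least possible value, then select
the remaining coordinates over the parameter space `X × ℝ`. -/
theorem exists_measurable_selection_pi {m : ℕ} {K : Set (Fin m → ℝ)} (hK : IsCompact K)
    {P : Set (X × (Fin m → ℝ))} (hP : IsClosed P) :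
    ∃ σ : X → Fin m → ℝ, Measurable σ ∧ ∀ x, (∃ u ∈ K, (x, u) ∈ P) → σ x ∈ K ∧ (x, σ x) ∈ P := by
  induction m generalizing X with
  | zero =>
    refine ⟨fun _ => Fin.elim0, measurable_const, fun x ⟨u, hu, hxu⟩ => ?_⟩
    exact Subsingleton.elim u (Fin.elim0 : Fin 0 → ℝ) ▸ ⟨hu, hxu⟩
  | succ m ih =>
    set q : X → ℝ := fun x => (sectionInf K P (fun _ u => u 0) x).toReal
    have hq : Measurable q := (lowerSemicontinuous_sectionInf hK hP
      (Φ := fun _ u => u 0) (by fun_prop)).measurable.ereal_toReal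
    have hcons : Continuous fun p : (X × ℝ) × (Fin m → ℝ) =>
        (Fin.cons p.1.2 p.2 : Fin (m + 1) → ℝ) :=
      continuous_fst.snd.finCons (A := fun _ => ℝ) continuous_snd
    obtain ⟨σ, hσ, hσP⟩ := ih
      (hK.image (f := Fin.tail) (continuous_pi fun i => continuous_apply _))
      ((hP.preimage (continuous_fst.fst.prodMk hcons)).inter
        (hK.isClosed.preimage hcons))
    refine ⟨fun x => Fin.cons (q x) (σ (x, q x)),
      ((continuous_fst.finCons (A := fun _ => ℝ) continuous_snd).measurable.comp
        (hq.prodMk (hσ.comp (measurable_id.prodMk hq)))), fun x hx => ?_⟩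
    obtain ⟨u, hu, hxu, hu0⟩ :=
      exists_sectionInf_eq (Φ := fun _ u => u 0) hK hP (continuous_apply 0) hx
    have hqx : q x = u 0 := by simp only [q, hu0, EReal.toReal_coe]
    have hcons_tail : (Fin.cons (q x) (Fin.tail u) : Fin (m + 1) → ℝ) = u := by
      rw [hqx, Fin.cons_self_tail]
    exact (hσP (x, q x) ⟨_, mem_image_of_mem _ hu,
        ⟨show (x, Fin.cons (q x) (Fin.tail u)) ∈ P by rwa [hcons_tail],
          show Fin.cons (q x) (Fin.tail u) ∈ K by rwa [hcons_tail]⟩⟩).2.symm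

variable {m : ℕ} {K : Set (EuclideanSpace ℝ (Fin m))} {P : Set (X × EuclideanSpace ℝ (Fin m))}

theorem exists_measurable_selection (hK : IsCompact K) (hKne : K.Nonempty) (hP : IsClosed P) :
    ∃ σ : X → EuclideanSpace ℝ (Fin m), Measurable σ ∧
      ∀ x, σ x ∈ K ∧ ((∃ u ∈ K, (x, u) ∈ P) → (x, σ x) ∈ P) := by
  classical
  let e := (EuclideanSpace.equiv (Fin m) ℝ).toHomeomorph
  obtain ⟨σ, hσ, hσP⟩ := exists_measurable_selection_pi (hK.image e.continuous)
    (hP.preimage (continuous_fst.prodMk (e.symm.continuous.comp continuous_snd)))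
  obtain ⟨u₀, hu₀⟩ := hKne
  refine ⟨fun x => if ∃ u ∈ K, (x, u) ∈ P then e.symm (σ x) else u₀,
    Measurable.ite (hK.isClosed_setOf_exists_mem_prod hP).measurableSet
      (e.symm.continuous.measurable.comp hσ) measurable_const, fun x => ?_⟩
  dsimp only
  split_ifs with hx
  · obtain ⟨u, hu, hxu⟩ := hx
    obtain ⟨⟨v, hv, hve⟩, hxσ⟩ :=
      hσP x ⟨e u, mem_image_of_mem e hu, by simpa only [mem_preimage, e.symm_apply_apply]⟩
    rw [← hve, e.symm_apply_apply]
    exact ⟨hv, fun _ => by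
      simpa only [mem_preimage, comp_apply, ← hve, e.symm_apply_apply] using hxσ⟩
  · exact ⟨hu₀, fun h => absurd h hx⟩

/- The minimisers do not form the section of a closed set (the minimal value is only lower
semicontinuous), so select from the closed set `{(x, r, u) | (x, u) ∈ P, Φ x u ≤ r}` and plug in
`r = sectionInf K P Φ x`, which is measurable. -/
theorem exists_measurable_argmin (hK : IsCompact K) (hKne : K.Nonempty) (hP : IsClosed P)
    {Φ : X → EuclideanSpace ℝ (Fin m) → ℝ} (hΦ : Continuous (uncurry Φ)) :
    ∃ σ : X → EuclideanSpace ℝ (Fin m), Measurable σ ∧ ∀ x, σ x ∈ K ∧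
      ((∃ u ∈ K, (x, u) ∈ P) → (x, σ x) ∈ P ∧ Φ x (σ x) = (sectionInf K P Φ x).toReal) := by
  obtain ⟨σ, hσ, hσP⟩ := exists_measurable_selection (X := X × ℝ) hK hKne
    (P := {q | (q.1.1, q.2) ∈ P ∧ Φ q.1.1 q.2 ≤ q.1.2})
    ((hP.preimage (continuous_fst.fst.prodMk continuous_snd)).inter
      (isClosed_le (hΦ.comp (continuous_fst.fst.prodMk continuous_snd)) continuous_fst.snd))
  have hinf : Measurable fun x => (sectionInf K P Φ x).toReal :=
    (lowerSemicontinuous_sectionInf hK hP hΦ).measurable.ereal_toReal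
  refine ⟨fun x => σ (x, (sectionInf K P Φ x).toReal), hσ.comp (measurable_id.prodMk hinf),
    fun x => ⟨(hσP _).1, fun hx => ?_⟩⟩
  obtain ⟨u, hu, hxu, hmin⟩ := exists_sectionInf_eq hK hP (hΦ.uncurry_left x) hx
  obtain ⟨hxσ, hσle⟩ := (hσP (x, _)).2 ⟨u, hu, hxu, (by rw [hmin, EReal.toReal_coe] :
    Φ x u ≤ (sectionInf K P Φ x).toReal)⟩
  exact ⟨hxσ, le_antisymm hσle (sectionInf_toReal_le hK hP (hΦ.uncurry_left x) (hσP _).1 hxσ)⟩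

end Selection

theorem ContinuousOn.exists_continuous_eqOn_Icc {β : Type*} [TopologicalSpace β] {g : ℝ → β}
    {a b : ℝ} (hab : a ≤ b) (hg : ContinuousOn g (Icc a b)) :
    ∃ g' : ℝ → β, Continuous g' ∧ EqOn g' g (Icc a b) :=
  ⟨IccExtend hab ((Icc a b).domRestrict g),
    (continuousOn_iff_continuous_domRestrict.1 hg).Icc_extend',
    fun _ hs => IccExtend_of_mem hab _ hs⟩

section Control

open scoped Interval

variable {N m : ℕ} {K : Set (EuclideanSpace ℝ (Fin m))}
  {F : EuclideanSpace ℝ (Fin N) → EuclideanSpace ℝ (Fin m) → ℝ}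
  {f : EuclideanSpace ℝ (Fin N) → EuclideanSpace ℝ (Fin m) → EuclideanSpace ℝ (Fin N)}
  {t T : ℝ} {y : EuclideanSpace ℝ (Fin N)} {z w : ℝ → EuclideanSpace ℝ (Fin N)}

theorem Admissible.continuousOn (h : Admissible t T y z w) : ContinuousOn z (Icc t T) :=
  ((continuousOn_const.add (intervalIntegral.continuousOn_primitive_interval' h.1
    left_mem_uIcc)).mono Icc_subset_uIcc).congr h.2

theorem Admissible.feasiblePair {u : ℝ → EuclideanSpace ℝ (Fin m)} (h : Admissible t T y z w)
    (hu : Measurable u) (huK : ∀ s ∈ Icc t T, u s ∈ K)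
    (hfu : ∀ᵐ s, s ∈ Ι t T → f (z s) (u s) = w s) : FeasiblePair T K f t y z u := by
  refine ⟨hu, huK, h.1.congr_ae ?_, fun s hs => ?_⟩
  · exact ((ae_restrict_iff' measurableSet_uIoc).2 hfu).mono fun _ h => h.symm
  · have hsub : Ι t s ⊆ Ι t T := by
      rw [uIoc_of_le hs.1, uIoc_of_le (hs.1.trans hs.2)]
      exact Ioc_subset_Ioc_right hs.2
    rw [h.2 s hs,
      intervalIntegral.integral_congr_ae (hfu.mono fun r hr hrs => (hr (hsub hrs)).symm)]

theorem phiRe_eq_sectionInf (x ξ : EuclideanSpace ℝ (Fin N)) :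
    phiRe K F f x ξ = sectionInf K {q | f q.1.1 q.2 = q.1.2} (fun p u => F p.1 u) (x, ξ) :=
  rfl

theorem isClosed_setOf_apply_eq (hfc : Continuous (uncurry f)) :
    IsClosed {q : (EuclideanSpace ℝ (Fin N) × EuclideanSpace ℝ (Fin N)) ×
      EuclideanSpace ℝ (Fin m) | f q.1.1 q.2 = q.1.2} :=
  isClosed_eq (hfc.comp (continuous_fst.fst.prodMk continuous_snd)) continuous_fst.snd

theorem exists_phiRe_toReal_eq (hK : IsCompact K) (hFc : Continuous (uncurry F))
    (hfc : Continuous (uncurry f)) {x ξ : EuclideanSpace ℝ (Fin N)} (h : ∃ u ∈ K, f x u = ξ) :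
    ∃ u ∈ K, f x u = ξ ∧ (phiRe K F f x ξ).toReal = F x u := by
  obtain ⟨u, hu, hxu, heq⟩ :=
    exists_sectionInf_eq (x := (x, ξ)) (Φ := fun p u => F p.1 u) hK (isClosed_setOf_apply_eq hfc)
      (hFc.uncurry_left x) h
  exact ⟨u, hu, hxu, by rw [phiRe_eq_sectionInf, heq, EReal.toReal_coe]⟩

theorem phiRe_toReal_le (hK : IsCompact K) (hFc : Continuous (uncurry F))
    (hfc : Continuous (uncurry f)) {x : EuclideanSpace ℝ (Fin N)} {u : EuclideanSpace ℝ (Fin m)}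
    (hu : u ∈ K) : (phiRe K F f x (f x u)).toReal ≤ F x u := by
  rw [phiRe_eq_sectionInf]
  exact sectionInf_toReal_le hK (isClosed_setOf_apply_eq hfc) (hFc.uncurry_left x) hu rfl

theorem measurable_phiRe (hK : IsCompact K) (hFc : Continuous (uncurry F))
    (hfc : Continuous (uncurry f)) :
    Measurable fun p : EuclideanSpace ℝ (Fin N) × EuclideanSpace ℝ (Fin N) =>
      phiRe K F f p.1 p.2 :=
  (lowerSemicontinuous_sectionInf (X := EuclideanSpace ℝ (Fin N) × EuclideanSpace ℝ (Fin N))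
    (Φ := fun p u => F p.1 u) hK (isClosed_setOf_apply_eq hfc)
    (hFc.comp (continuous_fst.fst.prodMk continuous_snd))).measurable

theorem exists_measurable_optimal_control (hK : IsCompact K) (hKne : K.Nonempty)
    (hFc : Continuous (uncurry F)) (hfc : Continuous (uncurry f)) :
    ∃ σ : EuclideanSpace ℝ (Fin N) × EuclideanSpace ℝ (Fin N) → EuclideanSpace ℝ (Fin m),
      Measurable σ ∧ ∀ p, σ p ∈ K ∧ ((∃ u ∈ K, f p.1 u = p.2) →
        f p.1 (σ p) = p.2 ∧ F p.1 (σ p) = (phiRe K F f p.1 p.2).toReal) :=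
  exists_measurable_argmin hK hKne (isClosed_setOf_apply_eq hfc)
    (hFc.comp (continuous_fst.fst.prodMk continuous_snd))

theorem FeasiblePair.intervalIntegrable {x : ℝ → EuclideanSpace ℝ (Fin N)}
    {u : ℝ → EuclideanSpace ℝ (Fin m)} (hK : IsCompact K) (hFc : Continuous (uncurry F))
    (hfc : Continuous (uncurry f)) (htT : t ≤ T) (h : FeasiblePair T K f t y x u) :
    IntervalIntegrable (fun s => F (x s) (u s)) volume t T ∧
      IntervalIntegrable (fun s => (phiRe K F f (x s) (f (x s) (u s))).toReal) volume t T := by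
  obtain ⟨hu, huK, hadm⟩ := h
  have hx : ContinuousOn x (Icc t T) := Admissible.continuousOn hadm
  obtain ⟨B, hB⟩ := ((isCompact_Icc.image_of_continuousOn hx).prod hK).exists_bound_of_continuousOn
    hFc.continuousOn
  have hΙ : Ι t T ⊆ Icc t T := by rw [uIoc_of_le htT]; exact Ioc_subset_Icc_self
  have hxu : AEMeasurable (fun s => (x s, u s)) (volume.restrict (Ι t T)) :=
    ((hx.mono hΙ).aestronglyMeasurable measurableSet_uIoc).aemeasurable.prodMk hu.aemeasurable
  have hbounded : ∀ g : ℝ → ℝ, AEMeasurable g (volume.restrict (Ι t T)) →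
      (∀ s ∈ Icc t T, ‖g s‖ ≤ B) → IntervalIntegrable g volume t T := fun g hg hgB =>
    (intervalIntegrable_const (c := B)).mono_fun' hg.aestronglyMeasurable
      (ae_restrict_of_forall_mem measurableSet_uIoc fun s hs => hgB s (hΙ hs))
  have hFB : ∀ s ∈ Icc t T, ∀ v ∈ K, ‖F (x s) v‖ ≤ B := fun s hs v hv =>
    hB (x s, v) ⟨mem_image_of_mem x hs, hv⟩
  have hφm : AEMeasurable (fun s => (phiRe K F f (x s) (f (x s) (u s))).toReal)
      (volume.restrict (Ι t T)) :=
    ((measurable_phiRe hK hFc hfc).comp_aemeasurable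
      ((continuous_fst.prodMk hfc).measurable.comp_aemeasurable hxu)).ereal_toReal
  refine ⟨hbounded _ (hFc.measurable.comp_aemeasurable hxu) fun s hs => hFB s hs _ (huK s hs),
    hbounded _ hφm fun s hs => ?_⟩
  obtain ⟨v, hv, -, heq⟩ := exists_phiRe_toReal_eq hK hFc hfc ⟨u s, huK s hs, rfl⟩
  exact heq ▸ hFB s hs v hv

theorem FeasiblePair.jphi_le_integral {x : ℝ → EuclideanSpace ℝ (Fin N)}
    {u : ℝ → EuclideanSpace ℝ (Fin m)} (hK : IsCompact K) (hFc : Continuous (uncurry F))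
    (hfc : Continuous (uncurry f)) (htT : t ≤ T) (h : FeasiblePair T K f t y x u) :
    Jphi K F f t T x (fun s => f (x s) (u s)) ≤ ((∫ s in t..T, F (x s) (u s) : ℝ) : EReal) := by
  obtain ⟨hFint, hφint⟩ := h.intervalIntegrable hK hFc hfc htT
  have hsolv : ∀ᵐ s ∂volume.restrict (Ioo t T), ∃ v ∈ K, f (x s) v = f (x s) (u s) :=
    ae_restrict_of_forall_mem measurableSet_Ioo fun s hs =>
      ⟨u s, h.2.1 s (Ioo_subset_Icc_self hs), rfl⟩
  rw [Jphi, if_pos ⟨hsolv, hφint⟩, EReal.coe_le_coe_iff]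
  exact intervalIntegral.integral_mono_on htT hφint hFint fun s hs =>
    phiRe_toReal_le hK hFc hfc (h.2.1 s hs)

theorem Admissible.exists_feasiblePair_integral_eq (hK : IsCompact K)
    (hFc : Continuous (uncurry F)) (hfc : Continuous (uncurry f)) (htT : t < T)
    (h : Admissible t T y z w)
    (hsolv : ∀ᵐ s ∂volume.restrict (Ioo t T), ∃ u ∈ K, f (z s) u = w s) :
    ∃ u, FeasiblePair T K f t y z u ∧
      ∫ s in t..T, F (z s) (u s) = ∫ s in t..T, (phiRe K F f (z s) (w s)).toReal := by
  have hKne : K.Nonempty := by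
    have : (ae (volume.restrict (Ioo t T))).NeBot := ae_restrict_neBot.2 (by simp [htT])
    obtain ⟨_, u, hu, -⟩ := hsolv.exists
    exact ⟨u, hu⟩
  obtain ⟨σ, hσ, hσK⟩ := exists_measurable_optimal_control hK hKne hFc hfc
  -- `z` is only pinned down on `[t, T]` and `w` only a.e., so select along a continuous extension
  -- of `z` and a measurable version of `w` to get a globally measurable control.
  obtain ⟨zc, hzc, hzcz⟩ := h.continuousOn.exists_continuous_eqOn_Icc htT.le
  have hw : AEMeasurable w (volume.restrict (Ioo t T)) :=
    (h.1.1.mono_set Ioo_subset_Ioc_self).aestronglyMeasurable.aemeasurable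
  have hopt : ∀ᵐ s, s ∈ Ι t T → f (z s) (σ (zc s, hw.mk w s)) = w s ∧
      F (z s) (σ (zc s, hw.mk w s)) = (phiRe K F f (z s) (w s)).toReal := by
    rw [uIoc_of_le htT.le, ← ae_restrict_iff' measurableSet_Ioc,
      ← Measure.restrict_congr_set Ioo_ae_eq_Ioc]
    filter_upwards [hsolv, ae_restrict_mem measurableSet_Ioo, hw.ae_eq_mk] with s hs hsI hws
    rw [hzcz (Ioo_subset_Icc_self hsI), ← hws]
    exact (hσK (z s, w s)).2 hs
  refine ⟨fun s => σ (zc s, hw.mk w s),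
    h.feasiblePair (hσ.comp (hzc.measurable.prodMk hw.measurable_mk)) (fun s _ => (hσK _).1)
      (hopt.mono fun s hs hsI => (hs hsI).1),
    intervalIntegral.integral_congr_ae (hopt.mono fun s hs hsI => (hs hsI).2)⟩

end Control

theorem stmt_3_general {N m : ℕ} (T : ℝ)
    (K : Set (EuclideanSpace ℝ (Fin m))) (hK : IsCompact K)
    (F : EuclideanSpace ℝ (Fin N) → EuclideanSpace ℝ (Fin m) → ℝ)
    (hFc : Continuous fun q : EuclideanSpace ℝ (Fin N) × EuclideanSpace ℝ (Fin m) => F q.1 q.2)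
    (f : EuclideanSpace ℝ (Fin N) → EuclideanSpace ℝ (Fin m) → EuclideanSpace ℝ (Fin N))
    (hfc : Continuous fun q : EuclideanSpace ℝ (Fin N) × EuclideanSpace ℝ (Fin m) => f q.1 q.2)
    (t : ℝ) (htT : t < T) (y : EuclideanSpace ℝ (Fin N))
    (x : ℝ → EuclideanSpace ℝ (Fin N)) (u : ℝ → EuclideanSpace ℝ (Fin m))
    (hfeas : FeasiblePair T K f t y x u)
    (hmin : ∀ x' u', FeasiblePair T K f t y x' u' →
      (∫ s in t..T, F (x s) (u s)) ≤ ∫ s in t..T, F (x' s) (u' s)) :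
    Admissible t T y x (fun s => f (x s) (u s)) ∧
    ∀ z w, Admissible t T y z w →
      Jphi K F f t T x (fun s => f (x s) (u s)) ≤ Jphi K F f t T z w := by
  refine ⟨hfeas.2.2, fun z w hzw => ?_⟩
  by_cases hz : (∀ᵐ s ∂volume.restrict (Ioo t T), ∃ v ∈ K, f (z s) v = w s) ∧
      IntervalIntegrable (fun s => (phiRe K F f (z s) (w s)).toReal) volume t T
  · obtain ⟨u', hu', hcost⟩ := hzw.exists_feasiblePair_integral_eq hK hFc hfc htT hz.1
    calc Jphi K F f t T x (fun s => f (x s) (u s))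
        ≤ ((∫ s in t..T, F (x s) (u s) : ℝ) : EReal) := hfeas.jphi_le_integral hK hFc hfc htT.le
      _ ≤ ((∫ s in t..T, F (z s) (u' s) : ℝ) : EReal) := EReal.coe_le_coe_iff.2 (hmin z u' hu')
      _ = Jphi K F f t T z w := by rw [hcost, Jphi, if_pos hz]
  · exact le_top.trans_eq (if_neg hz).symm

theorem stmt_3 {N m : ℕ} (T : ℝ) (hT : 0 < T)
    (K : Set (EuclideanSpace ℝ (Fin m))) (hK : IsCompact K)
    (F : EuclideanSpace ℝ (Fin N) → EuclideanSpace ℝ (Fin m) → ℝ)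
    (hFc : Continuous fun q : EuclideanSpace ℝ (Fin N) × EuclideanSpace ℝ (Fin m) => F q.1 q.2)
    (hFb : ∃ c : ℝ, ∀ x u, c ≤ F x u)
    (f : EuclideanSpace ℝ (Fin N) → EuclideanSpace ℝ (Fin m) → EuclideanSpace ℝ (Fin N))
    (hfc : Continuous fun q : EuclideanSpace ℝ (Fin N) × EuclideanSpace ℝ (Fin m) => f q.1 q.2)
    (t : ℝ) (ht0 : 0 ≤ t) (htT : t < T) (y : EuclideanSpace ℝ (Fin N))
    (x : ℝ → EuclideanSpace ℝ (Fin N)) (u : ℝ → EuclideanSpace ℝ (Fin m))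
    (hfeas : FeasiblePair T K f t y x u)
    (hmin : ∀ x' u', FeasiblePair T K f t y x' u' →
      (∫ s in t..T, F (x s) (u s)) ≤ ∫ s in t..T, F (x' s) (u' s)) :
    Admissible t T y x (fun s => f (x s) (u s)) ∧
    ∀ z w, Admissible t T y z w →
      Jphi K F f t T x (fun s => f (x s) (u s)) ≤ Jphi K F f t T z w :=
  stmt_3_general T K hK F hFc f hfc t htT y x u hfeas hmin
end
end

section
/- Suppose v : [0,T]×ℝ^N → ℝ^N is C¹ and Lipschitz in the spatial variable uniformly in t, and satisfies the first-order system v_t(t,x) + ∇v(t,x) v(t,x) + φ_{ξξ}(x, v(t,x))^{-1} ( φ_{ξx}(x, v(t,x)) v(t,x) − φ_x(x, v(t,x)) ) = 0 for all (t,x) ∈ (0,T)×ℝ^N, together with the terminal condition φ_ξ(x, v(T,x)) = 0 for all x ∈ ℝ^N. Then for every (t,y) ∈ [0,T)×ℝ^N, the solution x of x'(s) = v(s, x(s)) on (t,T), x(t) = y, satisfies ∫_t^T φ(x(s), x'(s)) ds ≤ ∫_t^T φ(z(s), z'(s)) ds for every admissible path z on [t,T] starting at y for which s ↦ φ(z(s),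 z'(s)) is integrable. -/
open MeasureTheory Set
open scoped RealInnerProductSpace

noncomputable section

/-- `φ_ξ(x,ξ)`: the gradient of `φ(x,·)`. -/
def gradXi {N : ℕ} (φ : EuclideanSpace ℝ (Fin N) → EuclideanSpace ℝ (Fin N) → ℝ)
    (x ξ : EuclideanSpace ℝ (Fin N)) : EuclideanSpace ℝ (Fin N) :=
  gradient (φ x) ξ

/-- `φ_x(x,ξ)`: the gradient of `φ(·,ξ)`. -/
def gradX {N : ℕ} (φ : EuclideanSpace ℝ (Fin N) → EuclideanSpace ℝ (Fin N) → ℝ)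
    (x ξ : EuclideanSpace ℝ (Fin N)) : EuclideanSpace ℝ (Fin N) :=
  gradient (fun x' => φ x' ξ) x

/-- `φ_{ξξ}(x,ξ)`: the Hessian block in `ξ`, as a continuous linear map. -/
def hessXiXi {N : ℕ} (φ : EuclideanSpace ℝ (Fin N) → EuclideanSpace ℝ (Fin N) → ℝ)
    (x ξ : EuclideanSpace ℝ (Fin N)) :
    EuclideanSpace ℝ (Fin N) →L[ℝ] EuclideanSpace ℝ (Fin N) :=
  fderiv ℝ (fun ξ' => gradient (φ x) ξ') ξ

/-- `φ_{ξx}(x,ξ)`: the mixed Hessian block (derivative in `x` of `φ_ξ`). -/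
def hessXiX {N : ℕ} (φ : EuclideanSpace ℝ (Fin N) → EuclideanSpace ℝ (Fin N) → ℝ)
    (x ξ : EuclideanSpace ℝ (Fin N)) :
    EuclideanSpace ℝ (Fin N) →L[ℝ] EuclideanSpace ℝ (Fin N) :=
  fderiv ℝ (fun x' => gradient (φ x') ξ) x

/-!
Along the integral curve `x` of `v`, write `ξ = v(·, x)` for its velocity and `p = φ_ξ(x, ξ)`
for the costate. The PDE says `ξ' = v_t + (∇v) v = -φ_{ξξ}⁻¹ (φ_{ξx} ξ - φ_x)`, so
`p' = φ_{ξx} ξ + φ_{ξξ} ξ' = φ_x(x, ξ)`: the curve solves the Euler–Lagrange equation, and the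
terminal condition gives `p(T) = 0`. For a competitor `(z, w)`, joint convexity gives
`φ(z, w) ≥ φ(x, ξ) + ⟪φ_x, z - x⟫ + ⟪φ_ξ, w - ξ⟫`, and the two correction terms integrate to
`⟪p(T), z(T) - x(T)⟫ - ⟪p(t), z(t) - x(t)⟫ = 0`. Since `z` is only absolutely continuous, this
integration by parts is done by Fubini over the triangle `t < s < r < T`.
-/

theorem ConvexOn.add_fderiv_sub_le {F : Type*} [NormedAddCommGroup F] [NormedSpace ℝ F]
    {f : F → ℝ} (hf : ConvexOn ℝ univ f) {a : F} {f' : F →L[ℝ] ℝ}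
    (hf' : HasFDerivAt f f' a) (b : F) : f a + f' (b - a) ≤ f b := by
  set ℓ : ℝ →ᵃ[ℝ] F := AffineMap.lineMap a b
  have hg : ConvexOn ℝ univ (f ∘ ℓ) := by simpa using hf.comp_affineMap ℓ
  have hg' : HasDerivAt (f ∘ ℓ) (f' (b - a)) 0 := by
    have hℓ : HasFDerivAt f f' (ℓ 0) := by simpa [ℓ] using hf'
    exact hℓ.comp_hasDerivAt (0 : ℝ) AffineMap.hasDerivAt_lineMap
  have := hg.le_slope_of_hasDerivAt (mem_univ 0) (mem_univ 1) one_pos hg'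
  simp [slope_def_field, ℓ] at this
  linarith [f'.map_sub b a]

section PartialDerivatives

variable {E F G : Type*} [NormedAddCommGroup E] [NormedSpace ℝ E] [NormedAddCommGroup F]
  [NormedSpace ℝ F] [NormedAddCommGroup G] [NormedSpace ℝ G] {f : E × F → G} {a : E} {b : F}

theorem HasFDerivAt.partial_fst {f' : E × F →L[ℝ] G} (hf : HasFDerivAt f f' (a, b)) :
    HasFDerivAt (fun e => f (e, b)) (f'.comp (.inl ℝ E F)) a :=
  hf.comp a (hasFDerivAt_prodMk_left a b)

theorem HasFDerivAt.partial_snd {f' : E × F →L[ℝ] G} (hf : HasFDerivAt f f' (a, b)) :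
    HasFDerivAt (fun y => f (a, y)) (f'.comp (.inr ℝ E F)) b :=
  hf.comp b (hasFDerivAt_prodMk_right a b)

theorem DifferentiableAt.fderiv_apply_eq_partial_add (hf : DifferentiableAt ℝ f (a, b)) (h : E)
    (k : F) : fderiv ℝ f (a, b) (h, k) =
      fderiv ℝ (fun e => f (e, b)) a h + fderiv ℝ (fun y => f (a, y)) b k := by
  rw [hf.hasFDerivAt.partial_fst.fderiv, hf.hasFDerivAt.partial_snd.fderiv]
  simp [← map_add]

theorem DifferentiableAt.hasDerivAt_comp_prodMk {c : ℝ → E} {d : ℝ → F} {s : ℝ} {c' : E} {d' : F}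
    (hf : DifferentiableAt ℝ f (c s, d s)) (hc : HasDerivAt c c' s) (hd : HasDerivAt d d' s) :
    HasDerivAt (fun σ => f (c σ, d σ))
      (fderiv ℝ (fun e => f (e, d s)) (c s) c' + fderiv ℝ (fun y => f (c s, y)) (d s) d') s := by
  rw [← hf.fderiv_apply_eq_partial_add]
  exact hf.hasFDerivAt.comp_hasDerivAt s (hc.prodMk hd)

theorem DifferentiableAt.hasDerivAt_along_curve {V : ℝ → E → G} {x : ℝ → E} {s : ℝ} {x' : E}
    {Vt : G} (hV : DifferentiableAt ℝ (Function.uncurry V) (s, x s))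
    (hVt : HasDerivAt (fun τ => V τ (x s)) Vt s) (hx : HasDerivAt x x' s) :
    HasDerivAt (fun σ => V σ (x σ)) (Vt + fderiv ℝ (V s) (x s) x') s := by
  have h := hV.hasDerivAt_comp_prodMk (hasDerivAt_id' s) hx
  have hVt' : fderiv ℝ (fun τ => Function.uncurry V (τ, x s)) s 1 = Vt := by
    simp [Function.uncurry, hVt.hasFDerivAt.fderiv]
  rwa [hVt'] at h

end PartialDerivatives

theorem ContinuousLinearMap.isUnit_of_inner_pos {E : Type*} [NormedAddCommGroup E]
    [InnerProductSpace ℝ E] [FiniteDimensional ℝ E] {A : E →L[ℝ] E}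
    (hA : ∀ v, v ≠ 0 → 0 < ⟪v, A v⟫) : IsUnit A := by
  have hinj : Function.Injective A := by
    refine (injective_iff_map_eq_zero A).mpr fun v hv => ?_
    by_contra hne
    simpa [hv] using hA v hne
  exact ContinuousLinearMap.isUnit_iff_bijective.mpr
    ⟨hinj, LinearMap.injective_iff_surjective.mp hinj⟩

section IntegrationByParts

variable {E : Type*} [NormedAddCommGroup E] [InnerProductSpace ℝ E] {a b : ℝ}

theorem IntervalIntegrable.continuousOn_inner {f g : ℝ → E} (hf : ContinuousOn f (uIcc a b))
    (hg : IntervalIntegrable g volume a b) :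
    IntervalIntegrable (fun s => ⟪f s, g s⟫) volume a b := by
  rw [intervalIntegrable_iff] at hg ⊢
  obtain ⟨C, hC⟩ := isCompact_uIcc.exists_bound_of_continuousOn hf
  refine (hg.norm.const_mul C).mono'
    (((hf.mono uIoc_subset_uIcc).aestronglyMeasurable measurableSet_uIoc).inner
      hg.aestronglyMeasurable) ?_
  filter_upwards [ae_restrict_mem measurableSet_uIoc] with s hs
  exact (norm_inner_le_norm _ _).trans
    (mul_le_mul_of_nonneg_right (hC s (uIoc_subset_uIcc hs)) (norm_nonneg _))

variable [CompleteSpace E]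

theorem integral_inner_integral_triangle {f g : ℝ → E} (hab : a ≤ b)
    (hf : IntervalIntegrable f volume a b) (hg : IntervalIntegrable g volume a b) :
    ∫ s in a..b, ⟪∫ r in s..b, f r, g s⟫ = ∫ r in a..b, ⟪f r, ∫ s in a..r, g s⟫ := by
  rw [intervalIntegrable_iff_integrableOn_Ioc_of_le hab] at hf hg
  set μ := volume.restrict (Ioc a b)
  set F : ℝ → ℝ → ℝ := fun s r => {q : ℝ × ℝ | q.1 < q.2}.indicator (fun q => ⟪f q.2, g q.1⟫) (s, r)
  have hF : Integrable (Function.uncurry F) (μ.prod μ) := by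
    refine (hg.norm.mul_prod hf.norm).mono' ?_ (Filter.Eventually.of_forall fun q => ?_)
    · exact (hf.aestronglyMeasurable.comp_snd.inner hg.aestronglyMeasurable.comp_fst).indicator
        (measurableSet_lt measurable_fst measurable_snd)
    · refine (norm_indicator_le_norm_self (fun q : ℝ × ℝ => ⟪f q.2, g q.1⟫) q).trans ?_
      rw [mul_comm]
      exact norm_inner_le_norm _ _
  have hleft : ∀ s ∈ Ioc a b, ⟪∫ r in s..b, f r, g s⟫ = ∫ r, F s r ∂μ := by
    intro s hs
    have hFs : (fun r => F s r) = (Ioi s).indicator (fun r => ⟪f r, g s⟫) := by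
      ext r; simp [F, indicator]
    have hIoc : Ioi s ∩ Ioc a b = Ioc s b := by
      rw [inter_comm, Ioc_inter_Ioi, max_eq_right hs.1.le]
    rw [hFs, integral_indicator measurableSet_Ioi, Measure.restrict_restrict measurableSet_Ioi,
      hIoc, intervalIntegral.integral_of_le hs.2, real_inner_comm, ← integral_inner
        (hf.mono_set (Ioc_subset_Ioc_left hs.1.le))]
    simp_rw [real_inner_comm]
  have hright : ∀ r ∈ Ioc a b, ∫ s, F s r ∂μ = ⟪f r, ∫ s in a..r, g s⟫ := by
    intro r hr
    have hFr : (fun s => F s r) = (Iio r).indicator (fun s => ⟪f r, g s⟫) := by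
      ext s; simp [F, indicator]
    have hIoo : Iio r ∩ Ioc a b = Ioo a r := by
      ext s; simp only [mem_inter_iff, mem_Iio, mem_Ioc, mem_Ioo]
      grind
    rw [hFr, integral_indicator measurableSet_Iio, Measure.restrict_restrict measurableSet_Iio,
      hIoo, ← integral_Ioc_eq_integral_Ioo, intervalIntegral.integral_of_le hr.1.le,
      ← integral_inner (hg.mono_set (Ioc_subset_Ioc_right hr.2))]
  calc ∫ s in a..b, ⟪∫ r in s..b, f r, g s⟫ = ∫ s, ∫ r, F s r ∂μ ∂μ := by
        rw [intervalIntegral.integral_of_le hab]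
        exact setIntegral_congr_fun measurableSet_Ioc hleft
    _ = ∫ r, ∫ s, F s r ∂μ ∂μ := integral_integral_swap hF
    _ = ∫ r in a..b, ⟪f r, ∫ s in a..r, g s⟫ := by
        rw [intervalIntegral.integral_of_le hab]
        exact setIntegral_congr_fun measurableSet_Ioc hright

theorem integral_inner_eq_neg_integral_inner_primitive {p q u : ℝ → E} (hab : a ≤ b)
    (hp : ContinuousOn p (Icc a b)) (hpq : ∀ s ∈ Ioo a b, HasDerivAt p (q s) s)
    (hq : IntervalIntegrable q volume a b) (hu : IntervalIntegrable u volume a b) (hpb : p b = 0) :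
    ∫ s in a..b, ⟪p s, u s⟫ = -∫ s in a..b, ⟪q s, ∫ r in a..s, u r⟫ := by
  have hp_eq : ∀ s ∈ Icc a b, p s = -∫ r in s..b, q r := by
    intro s hs
    rw [intervalIntegral.integral_eq_sub_of_hasDerivAt_of_le hs.2
      (hp.mono (Icc_subset_Icc_left hs.1)) (fun r hr => hpq r ⟨hs.1.trans_lt hr.1, hr.2⟩)
      (hq.mono_set (uIcc_subset_uIcc (by rwa [uIcc_of_le hab]) right_mem_uIcc)), hpb]
    simp
  rw [← integral_inner_integral_triangle hab hq hu, ← intervalIntegral.integral_neg]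
  refine intervalIntegral.integral_congr fun s hs => ?_
  rw [uIcc_of_le hab] at hs
  simp [hp_eq s hs, inner_neg_left]

end IntegrationByParts

section Lagrangian

variable {N : ℕ} {φ : EuclideanSpace ℝ (Fin N) → EuclideanSpace ℝ (Fin N) → ℝ}

local notation "ℝᴺ" => EuclideanSpace ℝ (Fin N)
local notation "Φ" => Function.uncurry φ

theorem gradXi_eq_toDual_symm {a b : ℝᴺ} (hφ : DifferentiableAt ℝ Φ (a, b)) :
    gradXi φ a b =
      (InnerProductSpace.toDual ℝ ℝᴺ).symm ((fderiv ℝ Φ (a, b)).comp (.inr ℝ ℝᴺ ℝᴺ)) :=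
  hφ.hasFDerivAt.partial_snd.hasGradientAt.gradient

theorem gradX_eq_toDual_symm {a b : ℝᴺ} (hφ : DifferentiableAt ℝ Φ (a, b)) :
    gradX φ a b =
      (InnerProductSpace.toDual ℝ ℝᴺ).symm ((fderiv ℝ Φ (a, b)).comp (.inl ℝ ℝᴺ ℝᴺ)) :=
  hφ.hasFDerivAt.partial_fst.hasGradientAt.gradient

theorem ConvexOn.add_inner_gradX_add_inner_gradXi_le (hconv : ConvexOn ℝ univ Φ)
    (hφ : Differentiable ℝ Φ) (a b c d : ℝᴺ) :
    φ a b + ⟪gradX φ a b, c - a⟫ + ⟪gradXi φ a b, d - b⟫ ≤ φ c d := by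
  have h := hconv.add_fderiv_sub_le (hφ (a, b)).hasFDerivAt (c, d)
  rw [gradX_eq_toDual_symm (hφ _), gradXi_eq_toDual_symm (hφ _),
    InnerProductSpace.toDual_symm_apply, InnerProductSpace.toDual_symm_apply]
  have hsplit : ((c, d) - (a, b) : ℝᴺ × ℝᴺ) = (c - a, 0) + (0, d - b) := by simp
  rw [hsplit, map_add] at h
  simpa [add_assoc] using h

theorem contDiff_gradXi {n m : WithTop ℕ∞} (hφ : ContDiff ℝ n Φ) (hmn : m + 1 ≤ n) :
    ContDiff ℝ m fun q : ℝᴺ × ℝᴺ => gradXi φ q.1 q.2 := by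
  have hd : Differentiable ℝ Φ :=
    (hφ.of_le ((le_add_self : (1 : WithTop ℕ∞) ≤ m + 1).trans hmn)).differentiable one_ne_zero
  simp_rw [gradXi_eq_toDual_symm (hd _)]
  exact (InnerProductSpace.toDual ℝ ℝᴺ).symm.contDiff.comp
    ((hφ.fderiv_right hmn).clm_comp contDiff_const)

theorem contDiff_gradX {n m : WithTop ℕ∞} (hφ : ContDiff ℝ n Φ) (hmn : m + 1 ≤ n) :
    ContDiff ℝ m fun q : ℝᴺ × ℝᴺ => gradX φ q.1 q.2 := by
  have hd : Differentiable ℝ Φ :=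
    (hφ.of_le ((le_add_self : (1 : WithTop ℕ∞) ≤ m + 1).trans hmn)).differentiable one_ne_zero
  simp_rw [gradX_eq_toDual_symm (hd _)]
  exact (InnerProductSpace.toDual ℝ ℝᴺ).symm.contDiff.comp
    ((hφ.fderiv_right hmn).clm_comp contDiff_const)

theorem hasDerivAt_gradXi_of_hasDerivAt (hφ : ContDiff ℝ 2 Φ) {x ξ : ℝ → ℝᴺ} {s : ℝ}
    (hH : IsUnit (hessXiXi φ (x s) (ξ s))) (hx : HasDerivAt x (ξ s) s)
    (hξ : HasDerivAt ξ (-Ring.inverse (hessXiXi φ (x s) (ξ s))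
      (hessXiX φ (x s) (ξ s) (ξ s) - gradX φ (x s) (ξ s))) s) :
    HasDerivAt (fun σ => gradXi φ (x σ) (ξ σ)) (gradX φ (x s) (ξ s)) s := by
  have hG : DifferentiableAt ℝ (fun q : ℝᴺ × ℝᴺ => gradXi φ q.1 q.2) (x s, ξ s) :=
    (contDiff_gradXi (m := 1) hφ (by norm_num)).differentiable one_ne_zero _
  have h : HasDerivAt (fun σ => gradXi φ (x σ) (ξ σ))
      (hessXiX φ (x s) (ξ s) (ξ s) + hessXiXi φ (x s) (ξ s) (-Ring.inverse
        (hessXiXi φ (x s) (ξ s)) (hessXiX φ (x s) (ξ s) (ξ s) - gradX φ (x s) (ξ s)))) s :=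
    hG.hasDerivAt_comp_prodMk hx hξ
  rw [map_neg, ← mul_apply_eq_comp, Ring.mul_inverse_cancel _ hH,
    one_apply_eq_self] at h
  simpa using h

theorem Admissible.sub_eq_integral_sub {a b : ℝ} {x ξ z w : ℝ → ℝᴺ}
    (hzw : Admissible a b (x a) z w) (hab : a ≤ b) (hx : ContinuousOn x (Icc a b))
    (hξ : IntervalIntegrable ξ volume a b) (hxξ : ∀ s ∈ Ioo a b, HasDerivAt x (ξ s) s) :
    ∀ s ∈ Icc a b, z s - x s = ∫ r in a..s, (w r - ξ r) := by
  intro s hs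
  have hsub : uIcc a s ⊆ uIcc a b := uIcc_subset_uIcc left_mem_uIcc (by rwa [uIcc_of_le hab])
  rw [hzw.2 s hs, intervalIntegral.integral_sub (hzw.1.mono_set hsub) (hξ.mono_set hsub),
    intervalIntegral.integral_eq_sub_of_hasDerivAt_of_le hs.1
      (hx.mono (Icc_subset_Icc_right hs.2)) (fun r hr => hxξ r ⟨hr.1, hr.2.trans_le hs.2⟩)
      (hξ.mono_set hsub)]
  abel

theorem integral_le_of_hasDerivAt_gradXi (hconv : ConvexOn ℝ univ Φ) (hφ : ContDiff ℝ 1 Φ)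
    {a b : ℝ} (hab : a ≤ b) {x ξ z w : ℝ → ℝᴺ} (hx : ContinuousOn x (Icc a b))
    (hξ : ContinuousOn ξ (Icc a b)) (hxξ : ∀ s ∈ Ioo a b, HasDerivAt x (ξ s) s)
    (hEL : ∀ s ∈ Ioo a b,
      HasDerivAt (fun σ => gradXi φ (x σ) (ξ σ)) (gradX φ (x s) (ξ s)) s)
    (hb : gradXi φ (x b) (ξ b) = 0) (hzw : Admissible a b (x a) z w)
    (hint : IntervalIntegrable (fun s => φ (z s) (w s)) volume a b) :
    ∫ s in a..b, φ (x s) (ξ s) ≤ ∫ s in a..b, φ (z s) (w s) := by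
  set p := fun s => gradXi φ (x s) (ξ s)
  set q := fun s => gradX φ (x s) (ξ s)
  have hpc : ContinuousOn p (Icc a b) :=
    (contDiff_gradXi (m := 0) hφ le_rfl).continuous.comp_continuousOn (hx.prodMk hξ)
  have hqc : ContinuousOn q (Icc a b) :=
    (contDiff_gradX (m := 0) hφ le_rfl).continuous.comp_continuousOn (hx.prodMk hξ)
  have hξi : IntervalIntegrable ξ volume a b := hξ.intervalIntegrable_of_Icc hab
  have hzx := hzw.sub_eq_integral_sub hab hx hξi hxξ
  have hw := hzw.1
  have hzxc : ContinuousOn (fun s => z s - x s) (Icc a b) := by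
    refine ContinuousOn.congr ?_ hzx
    simpa [uIcc_of_le hab] using
      intervalIntegral.continuousOn_primitive_interval' (hw.sub hξi) left_mem_uIcc
  have hbalance :
      (∫ s in a..b, ⟪q s, z s - x s⟫) + ∫ s in a..b, ⟪p s, w s - ξ s⟫ = 0 := by
    rw [integral_inner_eq_neg_integral_inner_primitive hab hpc hEL
      (hqc.intervalIntegrable_of_Icc hab) (hw.sub hξi) hb, add_neg_eq_zero]
    refine intervalIntegral.integral_congr fun s hs => ?_
    rw [uIcc_of_le hab] at hs
    simp only [hzx s hs, q]
  have hint₁ : IntervalIntegrable (fun s => φ (x s) (ξ s)) volume a b :=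
    (hφ.continuous.comp_continuousOn (hx.prodMk hξ)).intervalIntegrable_of_Icc hab
  have hint₂ : IntervalIntegrable (fun s => ⟪q s, z s - x s⟫) volume a b :=
    (hqc.inner hzxc).intervalIntegrable_of_Icc hab
  have hint₃ : IntervalIntegrable (fun s => ⟪p s, w s - ξ s⟫) volume a b :=
    (hw.sub hξi).continuousOn_inner (by rwa [uIcc_of_le hab])
  calc ∫ s in a..b, φ (x s) (ξ s)
      = (∫ s in a..b, φ (x s) (ξ s)) +
          ((∫ s in a..b, ⟪q s, z s - x s⟫) + ∫ s in a..b, ⟪p s, w s - ξ s⟫) := by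
        rw [hbalance, add_zero]
    _ = ∫ s in a..b, (φ (x s) (ξ s) + ⟪q s, z s - x s⟫ + ⟪p s, w s - ξ s⟫) := by
        rw [intervalIntegral.integral_add (hint₁.add hint₂) hint₃,
          intervalIntegral.integral_add hint₁ hint₂, add_assoc]
    _ ≤ ∫ s in a..b, φ (z s) (w s) :=
        intervalIntegral.integral_mono_on hab ((hint₁.add hint₂).add hint₃) hint fun s _ =>
          hconv.add_inner_gradX_add_inner_gradXi_le (hφ.differentiable one_ne_zero) _ _ _ _

end Lagrangian

theorem stmt_5_general {N : ℕ} (T : ℝ)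
    (φ : EuclideanSpace ℝ (Fin N) → EuclideanSpace ℝ (Fin N) → ℝ)
    (hφ : ContDiff ℝ 2 fun q : EuclideanSpace ℝ (Fin N) × EuclideanSpace ℝ (Fin N) => φ q.1 q.2)
    (hconv : ConvexOn ℝ Set.univ
      fun q : EuclideanSpace ℝ (Fin N) × EuclideanSpace ℝ (Fin N) => φ q.1 q.2)
    -- positive definiteness (hence invertibility) of the Hessian block φ_{ξξ}
    (hpos : ∀ x ξ v : EuclideanSpace ℝ (Fin N), v ≠ 0 → 0 < ⟪v, hessXiXi φ x ξ v⟫)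
    -- the field v : [0,T] × ℝ^N → ℝ^N, C¹ and spatially Lipschitz uniformly in t
    (v : ℝ → EuclideanSpace ℝ (Fin N) → EuclideanSpace ℝ (Fin N))
    (hv : ContDiffOn ℝ 1 (fun q : ℝ × EuclideanSpace ℝ (Fin N) => v q.1 q.2)
      (Icc 0 T ×ˢ Set.univ))
    -- the first-order PDE system v_t + (∇v) v + φ_{ξξ}⁻¹ (φ_{ξx} v − φ_x) = 0 on (0,T) × ℝ^N
    (hPDE : ∀ t ∈ Ioo (0:ℝ) T, ∀ x : EuclideanSpace ℝ (Fin N),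
      HasDerivAt (fun τ => v τ x)
        (-(fderiv ℝ (v t) x (v t x)
            + Ring.inverse (hessXiXi φ x (v t x))
              (hessXiX φ x (v t x) (v t x) - gradX φ x (v t x)))) t)
    -- the terminal condition φ_ξ(x, v(T,x)) = 0
    (hterm : ∀ x : EuclideanSpace ℝ (Fin N), gradXi φ x (v T x) = 0)
    -- an integral curve of v starting from (t,y)
    (t : ℝ) (ht : t ∈ Ico 0 T) (y : EuclideanSpace ℝ (Fin N))
    (x : ℝ → EuclideanSpace ℝ (Fin N)) (hxt : x t = y)
    (hxode : ∀ s ∈ Icc t T, HasDerivWithinAt x (v s (x s)) (Icc t T) s) :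
    -- it minimizes the variational problem among admissible competitors with
    -- integrable running cost
    ∀ z w, Admissible t T y z w →
      IntervalIntegrable (fun s => φ (z s) (w s)) volume t T →
      (∫ s in t..T, φ (x s) (v s (x s))) ≤ ∫ s in t..T, φ (z s) (w s) := by
  intro z w hzw hint
  subst hxt
  have hx : ∀ s ∈ Ioo t T, HasDerivAt x (v s (x s)) s := fun s hs =>
    (hxode s (Ioo_subset_Icc_self hs)).hasDerivAt (Icc_mem_nhds hs.1 hs.2)
  have hxc : ContinuousOn x (Icc t T) := fun s hs => (hxode s hs).continuousWithinAt
  have hξc : ContinuousOn (fun s => v s (x s)) (Icc t T) :=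
    hv.continuousOn.comp (continuousOn_id.prodMk hxc) fun s hs =>
      ⟨Icc_subset_Icc_left ht.1 hs, mem_univ _⟩
  refine integral_le_of_hasDerivAt_gradXi hconv (hφ.of_le one_le_two) ht.2.le hxc hξc hx
    (fun s hs => ?_) (hterm _) hzw hint
  have hs₀ : s ∈ Ioo 0 T := ⟨ht.1.trans_lt hs.1, hs.2⟩
  have hvd : DifferentiableAt ℝ (Function.uncurry v) (s, x s) :=
    (hv.contDiffAt (prod_mem_nhds (Icc_mem_nhds hs₀.1 hs₀.2) Filter.univ_mem)).differentiableAt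
      one_ne_zero
  refine hasDerivAt_gradXi_of_hasDerivAt hφ
    (ContinuousLinearMap.isUnit_of_inner_pos (hpos _ _)) (hx s hs) ?_
  exact (hvd.hasDerivAt_along_curve (hPDE s hs₀ (x s)) (hx s hs)).congr_deriv (by abel)

theorem stmt_5 {N : ℕ} (T : ℝ) (hT : 0 < T)
    (φ : EuclideanSpace ℝ (Fin N) → EuclideanSpace ℝ (Fin N) → ℝ)
    (hφ : ContDiff ℝ 2 fun q : EuclideanSpace ℝ (Fin N) × EuclideanSpace ℝ (Fin N) => φ q.1 q.2)
    (hconv : ConvexOn ℝ Set.univ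
      fun q : EuclideanSpace ℝ (Fin N) × EuclideanSpace ℝ (Fin N) => φ q.1 q.2)
    -- positive definiteness (hence invertibility) of the Hessian block φ_{ξξ}
    (hpos : ∀ x ξ v : EuclideanSpace ℝ (Fin N), v ≠ 0 → 0 < ⟪v, hessXiXi φ x ξ v⟫)
    -- the field v : [0,T] × ℝ^N → ℝ^N, C¹ and spatially Lipschitz uniformly in t
    (v : ℝ → EuclideanSpace ℝ (Fin N) → EuclideanSpace ℝ (Fin N))
    (hv : ContDiffOn ℝ 1 (fun q : ℝ × EuclideanSpace ℝ (Fin N) => v q.1 q.2)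
      (Icc 0 T ×ˢ Set.univ))
    (Lv : NNReal) (hLip : ∀ t ∈ Icc (0:ℝ) T, LipschitzWith Lv (v t))
    -- the first-order PDE system v_t + (∇v) v + φ_{ξξ}⁻¹ (φ_{ξx} v − φ_x) = 0 on (0,T) × ℝ^N
    (hPDE : ∀ t ∈ Ioo (0:ℝ) T, ∀ x : EuclideanSpace ℝ (Fin N),
      HasDerivAt (fun τ => v τ x)
        (-(fderiv ℝ (v t) x (v t x)
            + Ring.inverse (hessXiXi φ x (v t x))
              (hessXiX φ x (v t x) (v t x) - gradX φ x (v t x)))) t)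
    -- the terminal condition φ_ξ(x, v(T,x)) = 0
    (hterm : ∀ x : EuclideanSpace ℝ (Fin N), gradXi φ x (v T x) = 0)
    -- an integral curve of v starting from (t,y)
    (t : ℝ) (ht : t ∈ Ico 0 T) (y : EuclideanSpace ℝ (Fin N))
    (x : ℝ → EuclideanSpace ℝ (Fin N)) (hxt : x t = y)
    (hxode : ∀ s ∈ Icc t T, HasDerivWithinAt x (v s (x s)) (Icc t T) s) :
    -- it minimizes the variational problem among admissible competitors with
    -- integrable running cost
    ∀ z w, Admissible t T y z w →
      IntervalIntegrable (fun s => φ (z s) (w s)) volume t T →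
      (∫ s in t..T, φ (x s) (v s (x s))) ≤ ∫ s in t..T, φ (z s) (w s) :=
  stmt_5_general T φ hφ hconv hpos v hv hPDE hterm t ht y x hxt hxode
end
end

section
/- Let p : [0,T]×ℝ^N → ℝ^N be C¹ with p(T,x) = 0 for all x, solving the linear transport system p_t(t,x) + ∇p(t,x) f(x,u(t,x)) + ∇_x[f(x,u(t,x))]ᵀ p(t,x) = ∇_x[F(x,u(t,x))] on [0,T]×ℝ^N. If F_u(x,u(t,x)) − f_u(x,u(t,x))ᵀ p(t,x) = 0 for all (t,x) ∈ [0,T]×ℝ^N, then for every (t,y) ∈ [0,T)×ℝ^N and every C¹ variation U : [0,T]×ℝ^N → ℝ^m, the first variation δI(u;U;t,y) equals 0. -/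
/-! Pair the costate with the linearized state, `g(s) = ⟪p(s, x(s)), X(s)⟫`. Along the
trajectory the transport system is an ODE for the costate, `d/ds p(s, x(s)) = ∇ₓF − Aᵀ p` with
`A = f_x + f_u ∇u`, while `X' = A X + f_u U`. In `g'` the two `A`-terms cancel, leaving
`⟪∇ₓF, X⟫ + ⟪f_uᵀ p, U⟫`, and stationarity turns `f_uᵀ p` into `F_u`: so `g'` is the integrand
of `δI`, and `δI = g(T) − g(t) = 0` because `p(T, ·) = 0` and `X(t) = 0`. -/

open MeasureTheory Set
open scoped RealInnerProductSpace

noncomputable section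

section AlongCurve

variable {E G : Type*} [NormedAddCommGroup E] [NormedSpace ℝ E]
  [NormedAddCommGroup G] [NormedSpace ℝ G]
  {P : ℝ → E → G} {D : ℝ × E →L[ℝ] G} {S I : Set ℝ} {s : ℝ}

theorem HasFDerivWithinAt.hasFDerivAt_slice {z : E}
    (hP : HasFDerivWithinAt (fun q : ℝ × E => P q.1 q.2) D (S ×ˢ univ) (s, z)) (hs : s ∈ S) :
    HasFDerivAt (P s) (D.comp (ContinuousLinearMap.inr ℝ ℝ E)) z :=
  hasFDerivWithinAt_univ.mp <|
    hP.comp z (hasFDerivAt_prodMk_right s z).hasFDerivWithinAt fun _ _ => ⟨hs, mem_univ _⟩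

theorem HasFDerivWithinAt.hasDerivWithinAt_along_curve {x : ℝ → E} {v : E}
    (hP : HasFDerivWithinAt (fun q : ℝ × E => P q.1 q.2) D (S ×ˢ univ) (s, x s))
    (hx : HasDerivWithinAt x v I s) (hIS : I ⊆ S) :
    HasDerivWithinAt (fun τ => P τ (x τ)) (D (1, v)) I s := by
  have hcurve : HasDerivWithinAt (fun τ => (τ, x τ)) (1, v) I s :=
    (hasDerivWithinAt_id s I).prodMk hx
  exact hP.comp_hasDerivWithinAt s hcurve fun _ hτ => mk_mem_prod (hIS hτ) (mem_univ _)

theorem hasDerivWithinAt_along_curve_of_partials {x : ℝ → E} {v : E} {w : G}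
    (hP : DifferentiableWithinAt ℝ (fun q : ℝ × E => P q.1 q.2) (S ×ˢ univ) (s, x s))
    (hS : UniqueDiffWithinAt ℝ S s) (hs : s ∈ S)
    (hPt : HasDerivWithinAt (fun τ => P τ (x s)) w S s)
    (hx : HasDerivWithinAt x v I s) (hIS : I ⊆ S) :
    HasDerivWithinAt (fun τ => P τ (x τ)) (w + fderiv ℝ (P s) (x s) v) I s := by
  have hD := hP.hasFDerivWithinAt
  have hw : w = fderivWithin ℝ (fun q : ℝ × E => P q.1 q.2) (S ×ˢ univ) (s, x s) (1, 0) :=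
    hS.eq_deriv _ hPt <| hD.hasDerivWithinAt_along_curve (x := fun _ => x s)
      (hasDerivWithinAt_const s S (x s)) le_rfl
  rw [hw, (hD.hasFDerivAt_slice hs).fderiv, ContinuousLinearMap.comp_apply,
    ContinuousLinearMap.inr_apply, ← map_add, Prod.mk_add_mk, add_zero, zero_add]
  exact hD.hasDerivWithinAt_along_curve hx hIS

end AlongCurve

section PartialDerivatives

variable {E H G : Type*} [NormedAddCommGroup E] [NormedSpace ℝ E]
  [NormedAddCommGroup H] [NormedSpace ℝ H] [NormedAddCommGroup G] [NormedSpace ℝ G]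
  {F : E → H → G}

theorem ContDiff.continuous_fderiv_right (hF : ContDiff ℝ 1 fun q : E × H => F q.1 q.2) :
    Continuous fun q : E × H => fderiv ℝ (F q.1) q.2 := by
  have hslice : ∀ q : E × H, fderiv ℝ (F q.1) q.2 =
      (fderiv ℝ (fun q : E × H => F q.1 q.2) q).comp (ContinuousLinearMap.inr ℝ E H) := by
    rintro ⟨a, b⟩
    have h : HasFDerivAt (F a)
        ((fderiv ℝ (fun q : E × H => F q.1 q.2) (a, b)).comp (ContinuousLinearMap.inr ℝ E H)) b :=
      (hF.differentiable one_ne_zero (a, b)).hasFDerivAt.comp b (hasFDerivAt_prodMk_right a b)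
    exact h.fderiv
  simp only [hslice]
  exact (hF.continuous_fderiv one_ne_zero).clm_comp continuous_const

theorem ContDiff.continuousOn_fderiv_comp_slice (hF : ContDiff ℝ 1 fun q : E × H => F q.1 q.2)
    {u : ℝ → E → H} {S : Set ℝ} (hS : UniqueDiffOn ℝ S)
    (hu : ContDiffOn ℝ 1 (fun q : ℝ × E => u q.1 q.2) (S ×ˢ univ)) :
    ContinuousOn (fun q : ℝ × E => fderiv ℝ (fun z => F z (u q.1 z)) q.2) (S ×ˢ univ) := by
  set Du := fderivWithin ℝ (fun q : ℝ × E => u q.1 q.2) (S ×ˢ univ)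
  have hchain : ∀ q ∈ S ×ˢ (univ : Set E), fderiv ℝ (fun z => F z (u q.1 z)) q.2 =
      (fderiv ℝ (fun q : E × H => F q.1 q.2) (q.2, u q.1 q.2)).comp
        ((ContinuousLinearMap.id ℝ E).prod ((Du q).comp (ContinuousLinearMap.inr ℝ ℝ E))) := by
    rintro ⟨s, z⟩ ⟨hs, -⟩
    have hus := (hu.differentiableOn one_ne_zero (s, z) ⟨hs, mem_univ z⟩).hasFDerivWithinAt
    exact ((hF.differentiable one_ne_zero _).hasFDerivAt.comp z
      ((hasFDerivAt_id z).prodMk (hus.hasFDerivAt_slice hs))).fderiv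
  refine ContinuousOn.congr ?_ hchain
  have hDu : ContinuousOn Du (S ×ˢ univ) :=
    hu.continuousOn_fderivWithin (hS.prod uniqueDiffOn_univ) le_rfl
  refine ((hF.continuous_fderiv one_ne_zero).comp_continuousOn
    (continuous_snd.continuousOn.prodMk hu.continuousOn)).clm_comp ?_
  exact (ContinuousLinearMap.prodₗᵢ ℝ).continuous.comp_continuousOn
    (continuousOn_const.prodMk (hDu.clm_comp continuousOn_const))

end PartialDerivatives

section Pairing

variable {E H : Type*} [NormedAddCommGroup E] [InnerProductSpace ℝ E] [CompleteSpace E]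
  [NormedAddCommGroup H] [InnerProductSpace ℝ H] [CompleteSpace H]

theorem inner_sub_adjoint_add_inner_add (a p X : E) (A : E →L[ℝ] E) (B : H →L[ℝ] E) (V : H) :
    ⟪a - A.adjoint p, X⟫ + ⟪p, A X + B V⟫ = ⟪a, X⟫ + ⟪B.adjoint p, V⟫ := by
  simp only [inner_sub_left, inner_add_right, ContinuousLinearMap.adjoint_inner_left]
  ring

theorem continuousOn_inner_gradient_add_inner_gradient {F : E → H → ℝ}
    (hF : ContDiff ℝ 1 fun q : E × H => F q.1 q.2) {u U : ℝ → E → H} {S I : Set ℝ}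
    (hS : UniqueDiffOn ℝ S) (hIS : I ⊆ S)
    (hu : ContDiffOn ℝ 1 (fun q : ℝ × E => u q.1 q.2) (S ×ˢ univ))
    (hU : ContinuousOn (fun q : ℝ × E => U q.1 q.2) (S ×ˢ univ))
    {x X : ℝ → E} (hx : ContinuousOn x I) (hX : ContinuousOn X I) :
    ContinuousOn (fun s => ⟪gradient (fun z => F z (u s z)) (x s), X s⟫
      + ⟪gradient (F (x s)) (u s (x s)), U s (x s)⟫) I := by
  simp only [inner_gradient_left]
  have hcurve : ContinuousOn (fun s => (s, x s)) I := continuousOn_id.prodMk hx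
  have hmaps : MapsTo (fun s => (s, x s)) I (S ×ˢ univ) := fun s hs => ⟨hIS hs, mem_univ _⟩
  have hux : ContinuousOn (fun s => u s (x s)) I := hu.continuousOn.comp hcurve hmaps
  exact (((hF.continuousOn_fderiv_comp_slice hS hu).comp hcurve hmaps).clm_apply hX).add
    ((hF.continuous_fderiv_right.comp_continuousOn (hx.prodMk hux)).clm_apply
      (hU.comp hcurve hmaps))

end Pairing

theorem intervalIntegral.integral_eq_sub_of_hasDerivWithinAt_Icc {E : Type*}
    [NormedAddCommGroup E] [NormedSpace ℝ E] [CompleteSpace E] {f f' : ℝ → E} {a b : ℝ}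
    (hab : a ≤ b) (hf : ∀ s ∈ Icc a b, HasDerivWithinAt f (f' s) (Icc a b) s)
    (hf' : ContinuousOn f' (Icc a b)) :
    ∫ s in a..b, f' s = f b - f a :=
  integral_eq_sub_of_hasDeriv_right_of_le hab (fun s hs => (hf s hs).continuousWithinAt)
    (fun s hs => ((hf s (Ioo_subset_Icc_self hs)).hasDerivAt
      (Icc_mem_nhds hs.1 hs.2)).hasDerivWithinAt)
    (hf'.intervalIntegrable_of_Icc hab)

theorem stmt_8_general {N m : ℕ} (T : ℝ)
    (F : EuclideanSpace ℝ (Fin N) → EuclideanSpace ℝ (Fin m) → ℝ)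
    (f : EuclideanSpace ℝ (Fin N) → EuclideanSpace ℝ (Fin m) → EuclideanSpace ℝ (Fin N))
    (hF : ContDiff ℝ 1 fun q : EuclideanSpace ℝ (Fin N) × EuclideanSpace ℝ (Fin m) => F q.1 q.2)
    -- the C¹ feedback field u on [0,T] × ℝ^N
    (u : ℝ → EuclideanSpace ℝ (Fin N) → EuclideanSpace ℝ (Fin m))
    (hu : ContDiffOn ℝ 1 (fun q : ℝ × EuclideanSpace ℝ (Fin N) => u q.1 q.2)
      (Icc 0 T ×ˢ Set.univ))
    -- the C¹ costate p on [0,T] × ℝ^N with p(T,·) = 0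
    (p : ℝ → EuclideanSpace ℝ (Fin N) → EuclideanSpace ℝ (Fin N))
    (hp : ContDiffOn ℝ 1 (fun q : ℝ × EuclideanSpace ℝ (Fin N) => p q.1 q.2)
      (Icc 0 T ×ˢ Set.univ))
    (hpT : ∀ x, p T x = 0)
    -- the linear transport system:
    -- p_t + ∇p f(x,u) + ∇ₓ[f(x,u(t,x))]ᵀ p = ∇ₓ[F(x,u(t,x))] on [0,T] × ℝ^N
    (hPDE : ∀ t ∈ Icc (0:ℝ) T, ∀ x : EuclideanSpace ℝ (Fin N),
      HasDerivWithinAt (fun τ => p τ x)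
        (gradient (fun x' => F x' (u t x')) x
          - fderiv ℝ (p t) x (f x (u t x))
          - ContinuousLinearMap.adjoint (fderiv ℝ (fun x' => f x' (u t x')) x) (p t x))
        (Icc 0 T) t)
    -- the stationarity condition F_u(x,u(t,x)) − f_u(x,u(t,x))ᵀ p(t,x) = 0 everywhere
    (hstat : ∀ t ∈ Icc (0:ℝ) T, ∀ x : EuclideanSpace ℝ (Fin N),
      gradient (F x) (u t x)
        - ContinuousLinearMap.adjoint (fderiv ℝ (f x) (u t x)) (p t x) = 0)
    -- initial data and associated state trajectory
    (t : ℝ) (ht : t ∈ Ico 0 T)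
    (x : ℝ → EuclideanSpace ℝ (Fin N))
    (hx : ∀ s ∈ Icc t T, HasDerivWithinAt x (f (x s) (u s (x s))) (Icc t T) s)
    -- a C¹ variation U and the linearized state X
    (U : ℝ → EuclideanSpace ℝ (Fin N) → EuclideanSpace ℝ (Fin m))
    (hU : ContDiffOn ℝ 1 (fun q : ℝ × EuclideanSpace ℝ (Fin N) => U q.1 q.2)
      (Icc 0 T ×ˢ Set.univ))
    (X : ℝ → EuclideanSpace ℝ (Fin N)) (hXt : X t = 0)
    (hX : ∀ s ∈ Icc t T, HasDerivWithinAt X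
      (fderiv ℝ (fun x' => f x' (u s x')) (x s) (X s)
        + fderiv ℝ (f (x s)) (u s (x s)) (U s (x s))) (Icc t T) s) :
    -- conclusion: the first variation of the cost vanishes
    (∫ s in t..T,
      (⟪gradient (fun x' => F x' (u s x')) (x s), X s⟫
        + ⟪gradient (F (x s)) (u s (x s)), U s (x s)⟫)) = 0 := by
  obtain ⟨ht0, htT⟩ := ht
  have hsub : Icc t T ⊆ Icc 0 T := Icc_subset_Icc_left ht0
  have hS : UniqueDiffOn ℝ (Icc 0 T) := uniqueDiffOn_Icc (ht0.trans_lt htT)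
  have hcostate : ∀ s ∈ Icc t T, HasDerivWithinAt (fun τ => p τ (x τ))
      (gradient (fun x' => F x' (u s x')) (x s)
        - ContinuousLinearMap.adjoint (fderiv ℝ (fun x' => f x' (u s x')) (x s)) (p s (x s)))
      (Icc t T) s := fun s hs => by
    refine (hasDerivWithinAt_along_curve_of_partials
      (hp.differentiableOn one_ne_zero _ ⟨hsub hs, mem_univ _⟩) (hS _ (hsub hs)) (hsub hs)
      (hPDE s (hsub hs) (x s)) (hx s hs) hsub).congr_deriv ?_
    rw [sub_right_comm]
    exact sub_add_cancel _ _
  have hpairing : ∀ s ∈ Icc t T, HasDerivWithinAt (fun τ => ⟪p τ (x τ), X τ⟫)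
      (⟪gradient (fun x' => F x' (u s x')) (x s), X s⟫
        + ⟪gradient (F (x s)) (u s (x s)), U s (x s)⟫) (Icc t T) s := fun s hs => by
    rw [sub_eq_zero.mp (hstat s (hsub hs) (x s)), ← inner_sub_adjoint_add_inner_add, add_comm]
    exact (hcostate s hs).inner ℝ (hX s hs)
  rw [intervalIntegral.integral_eq_sub_of_hasDerivWithinAt_Icc htT.le hpairing
    (continuousOn_inner_gradient_add_inner_gradient hF hS hsub hu hU.continuousOn
      (fun s hs => (hx s hs).continuousWithinAt) (fun s hs => (hX s hs).continuousWithinAt)),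
    hpT, hXt, inner_zero_left, inner_zero_right, sub_zero]

theorem stmt_8 {N m : ℕ} (T : ℝ) (hT : 0 < T)
    (F : EuclideanSpace ℝ (Fin N) → EuclideanSpace ℝ (Fin m) → ℝ)
    (f : EuclideanSpace ℝ (Fin N) → EuclideanSpace ℝ (Fin m) → EuclideanSpace ℝ (Fin N))
    (hF : ContDiff ℝ 1 fun q : EuclideanSpace ℝ (Fin N) × EuclideanSpace ℝ (Fin m) => F q.1 q.2)
    (hf : ContDiff ℝ 1 fun q : EuclideanSpace ℝ (Fin N) × EuclideanSpace ℝ (Fin m) => f q.1 q.2)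
    -- the C¹ feedback field u on [0,T] × ℝ^N
    (u : ℝ → EuclideanSpace ℝ (Fin N) → EuclideanSpace ℝ (Fin m))
    (hu : ContDiffOn ℝ 1 (fun q : ℝ × EuclideanSpace ℝ (Fin N) => u q.1 q.2)
      (Icc 0 T ×ˢ Set.univ))
    -- the C¹ costate p on [0,T] × ℝ^N with p(T,·) = 0
    (p : ℝ → EuclideanSpace ℝ (Fin N) → EuclideanSpace ℝ (Fin N))
    (hp : ContDiffOn ℝ 1 (fun q : ℝ × EuclideanSpace ℝ (Fin N) => p q.1 q.2)
      (Icc 0 T ×ˢ Set.univ))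
    (hpT : ∀ x, p T x = 0)
    -- the linear transport system:
    -- p_t + ∇p f(x,u) + ∇ₓ[f(x,u(t,x))]ᵀ p = ∇ₓ[F(x,u(t,x))] on [0,T] × ℝ^N
    (hPDE : ∀ t ∈ Icc (0:ℝ) T, ∀ x : EuclideanSpace ℝ (Fin N),
      HasDerivWithinAt (fun τ => p τ x)
        (gradient (fun x' => F x' (u t x')) x
          - fderiv ℝ (p t) x (f x (u t x))
          - ContinuousLinearMap.adjoint (fderiv ℝ (fun x' => f x' (u t x')) x) (p t x))
        (Icc 0 T) t)
    -- the stationarity condition F_u(x,u(t,x)) − f_u(x,u(t,x))ᵀ p(t,x) = 0 everywhere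
    (hstat : ∀ t ∈ Icc (0:ℝ) T, ∀ x : EuclideanSpace ℝ (Fin N),
      gradient (F x) (u t x)
        - ContinuousLinearMap.adjoint (fderiv ℝ (f x) (u t x)) (p t x) = 0)
    -- initial data and associated state trajectory
    (t : ℝ) (ht : t ∈ Ico 0 T) (y : EuclideanSpace ℝ (Fin N))
    (x : ℝ → EuclideanSpace ℝ (Fin N)) (hxt : x t = y)
    (hx : ∀ s ∈ Icc t T, HasDerivWithinAt x (f (x s) (u s (x s))) (Icc t T) s)
    -- a C¹ variation U and the linearized state X
    (U : ℝ → EuclideanSpace ℝ (Fin N) → EuclideanSpace ℝ (Fin m))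
    (hU : ContDiffOn ℝ 1 (fun q : ℝ × EuclideanSpace ℝ (Fin N) => U q.1 q.2)
      (Icc 0 T ×ˢ Set.univ))
    (X : ℝ → EuclideanSpace ℝ (Fin N)) (hXt : X t = 0)
    (hX : ∀ s ∈ Icc t T, HasDerivWithinAt X
      (fderiv ℝ (fun x' => f x' (u s x')) (x s) (X s)
        + fderiv ℝ (f (x s)) (u s (x s)) (U s (x s))) (Icc t T) s) :
    -- conclusion: the first variation of the cost vanishes
    (∫ s in t..T,
      (⟪gradient (fun x' => F x' (u s x')) (x s), X s⟫
        + ⟪gradient (F (x s)) (u s (x s)), U s (x s)⟫)) = 0 :=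
  stmt_8_general T F f hF u hu p hp hpT hPDE hstat t ht x hx U hU X hXt hX
end
end
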